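/- Let Ω ⊆ ℝ² be open and x ∈ Ω. Let Ω₁, …, Ω_M ⊆ ℝ² be open patches, and let w₁, …, w_M : ℝ² → ℝ be differentiable with Σ_{ℓ=1}^M w_ℓ ≡ 1 on Ω, w_ℓ ≥ 0, and with the closed support of w_ℓ contained in Ω_ℓ (so w_ℓ and ∇w_ℓ vanish outside Ω_ℓ); assume ‖∇w_ℓ(x)‖ ≤ C_ℓ. Let ψ₁, …, ψ_M : ℝ² → ℝ be differentiable, let u(x) ∈ ℝ², and suppose ‖u(x) − L(ψ_ℓ)(x)‖ ≤ E_ℓ for every ℓ with x ∈ Ω_ℓ, where L(ψ) = (−∂₂ψ, ∂₁ψ). Fix any k with x ∈ Ω_k and suppose |ψ_ℓ(x) − ψ_k(x)| ≤ δ_ℓ for every ℓ with x ∈ Ω_ℓ. Then the div-free partition-of-unity approximant s̃ = L( Σ_{ℓ=1}^M w_ℓ ψ_ℓ ) satisfies ‖u(x) − s̃(x)‖ ≤ max { E_ℓ : x ∈ Ω_ℓ } + Σ_{ℓ : x ∈ Ω_ℓ} C_ℓ δ_ℓ. -/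

import Mathlib

open scoped Classical

/-- Partial derivative in coordinate direction `i`. -/
noncomputable def pd (i : Fin 2) (f : EuclideanSpace ℝ (Fin 2) → ℝ)
    (x : EuclideanSpace ℝ (Fin 2)) : ℝ :=
  fderiv ℝ f x (EuclideanSpace.single i 1)

/-- The planar rotated-gradient (surface curl) operator `L(f) = (−∂₂f, ∂₁f)`. -/
noncomputable def Lop (f : EuclideanSpace ℝ (Fin 2) → ℝ)
    (x : EuclideanSpace ℝ (Fin 2)) : EuclideanSpace ℝ (Fin 2) :=
  (WithLp.equiv 2 (Fin 2 → ℝ)).symm ![-(pd 1 f x), pd 0 f x]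

/-!
Near `x` the weights sum to `1`, so `∑ ℓ, L(w ℓ) x = 0` and, by the product rule,
`u - s̃ x = ∑ ℓ, w ℓ x • (u - L(ψ ℓ) x) + ∑ ℓ, (ψ k x - ψ ℓ x) • L(w ℓ) x`, where only the
patches containing `x` contribute since `tsupport (w ℓ) ⊆ Ωp ℓ`. The first sum is a convex
combination of vectors of norm at most `E ℓ`; in the second, `‖L(w ℓ) x‖ = ‖∇(w ℓ) x‖ ≤ C ℓ`.
-/

open Finset Filter Topology

section Lop

variable {x : EuclideanSpace ℝ (Fin 2)}

/-- `Lop f x` depends on `f` only through `fderiv ℝ f x`, and linearly so. -/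
noncomputable def rotGrad :
    (EuclideanSpace ℝ (Fin 2) →L[ℝ] ℝ) →ₗ[ℝ] EuclideanSpace ℝ (Fin 2) where
  toFun L := (WithLp.equiv 2 (Fin 2 → ℝ)).symm
    ![-L (EuclideanSpace.single 1 1), L (EuclideanSpace.single 0 1)]
  map_add' L L' := by ext i; fin_cases i <;> simp [add_comm]
  map_smul' c L := by ext i; fin_cases i <;> simp

theorem Lop_eq_rotGrad_fderiv (f : EuclideanSpace ℝ (Fin 2) → ℝ) (x : EuclideanSpace ℝ (Fin 2)) :
    Lop f x = rotGrad (fderiv ℝ f x) :=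
  rfl

theorem gradient_apply_eq_pd (f : EuclideanSpace ℝ (Fin 2) → ℝ) (x : EuclideanSpace ℝ (Fin 2))
    (i : Fin 2) : gradient f x i = pd i f x := by
  rw [pd, ← inner_gradient_left, EuclideanSpace.inner_single_right]
  simp

theorem norm_Lop (f : EuclideanSpace ℝ (Fin 2) → ℝ) (x : EuclideanSpace ℝ (Fin 2)) :
    ‖Lop f x‖ = ‖gradient f x‖ := by
  rw [EuclideanSpace.norm_eq, EuclideanSpace.norm_eq, Fin.sum_univ_two, Fin.sum_univ_two]
  simp [Lop, gradient_apply_eq_pd, add_comm]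

theorem Lop_eq_zero_of_notMem_tsupport {f : EuclideanSpace ℝ (Fin 2) → ℝ}
    (h : x ∉ tsupport f) : Lop f x = 0 := by
  rw [Lop_eq_rotGrad_fderiv, fderiv_of_notMem_tsupport ℝ h, map_zero]

theorem Lop_fun_sum {ι : Type*} (s : Finset ι) (f : ι → EuclideanSpace ℝ (Fin 2) → ℝ)
    (hf : ∀ i ∈ s, DifferentiableAt ℝ (f i) x) :
    Lop (fun y => ∑ i ∈ s, f i y) x = ∑ i ∈ s, Lop (f i) x := by
  simp only [Lop_eq_rotGrad_fderiv, fderiv_fun_sum hf, map_sum]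

theorem Lop_fun_mul {f g : EuclideanSpace ℝ (Fin 2) → ℝ} (hf : DifferentiableAt ℝ f x)
    (hg : DifferentiableAt ℝ g x) :
    Lop (fun y => f y * g y) x = f x • Lop g x + g x • Lop f x := by
  simp only [Lop_eq_rotGrad_fderiv, fderiv_fun_mul hf hg, map_add, map_smul]

theorem sum_Lop_eq_zero_of_sum_eventually_const {ι : Type*} (s : Finset ι)
    (f : ι → EuclideanSpace ℝ (Fin 2) → ℝ) (hf : ∀ i ∈ s, DifferentiableAt ℝ (f i) x) (c : ℝ)
    (h : ∀ᶠ y in 𝓝 x, ∑ i ∈ s, f i y = c) : ∑ i ∈ s, Lop (f i) x = 0 := by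
  rw [← Lop_fun_sum s f hf, Lop_eq_rotGrad_fderiv, Filter.EventuallyEq.fderiv_eq h,
    fderiv_const_apply, map_zero]

end Lop

section PartitionOfUnity

variable {ι V : Type*} [NormedAddCommGroup V] [NormedSpace ℝ V] {s : Finset ι}

theorem norm_sub_sum_smul_le_sup' (hs : s.Nonempty) (a : ι → ℝ) (v : ι → V) (u : V)
    (E : ι → ℝ) (ha : ∀ i ∈ s, 0 ≤ a i) (ha_sum : ∑ i ∈ s, a i = 1)
    (hE : ∀ i ∈ s, ‖u - v i‖ ≤ E i) :
    ‖u - ∑ i ∈ s, a i • v i‖ ≤ s.sup' hs E := by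
  have hconvex : u - ∑ i ∈ s, a i • v i = ∑ i ∈ s, a i • (u - v i) := by
    simp only [smul_sub, sum_sub_distrib, ← sum_smul, ha_sum, one_smul]
  calc ‖u - ∑ i ∈ s, a i • v i‖ ≤ ∑ i ∈ s, ‖a i • (u - v i)‖ := hconvex ▸ norm_sum_le _ _
    _ ≤ ∑ i ∈ s, a i * s.sup' hs E := sum_le_sum fun i hi => by
        rw [norm_smul, Real.norm_of_nonneg (ha i hi)]
        exact mul_le_mul_of_nonneg_left ((hE i hi).trans (le_sup' E hi)) (ha i hi)
    _ = s.sup' hs E := by rw [← sum_mul, ha_sum, one_mul]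

theorem norm_sum_smul_le_of_sum_eq_zero (p : ι → ℝ) (g : ι → V) (c : ℝ) (C δ : ι → ℝ)
    (hg : ∑ i ∈ s, g i = 0) (hC : ∀ i ∈ s, ‖g i‖ ≤ C i) (hδ : ∀ i ∈ s, |p i - c| ≤ δ i) :
    ‖∑ i ∈ s, p i • g i‖ ≤ ∑ i ∈ s, C i * δ i := by
  have hshift : ∑ i ∈ s, p i • g i = ∑ i ∈ s, (p i - c) • g i := by
    simp only [sub_smul, sum_sub_distrib, ← smul_sum, hg, smul_zero, sub_zero]
  rw [hshift]
  refine (norm_sum_le _ _).trans (sum_le_sum fun i hi => ?_)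
  rw [norm_smul, Real.norm_eq_abs, mul_comm]
  exact mul_le_mul (hC i hi) (hδ i hi) (abs_nonneg _) ((norm_nonneg _).trans (hC i hi))

theorem norm_sub_sum_smul_add_smul_le (hs : s.Nonempty) (a p : ι → ℝ) (v g : ι → V) (u : V)
    (c : ℝ) (E C δ : ι → ℝ) (ha : ∀ i ∈ s, 0 ≤ a i) (ha_sum : ∑ i ∈ s, a i = 1)
    (hg : ∑ i ∈ s, g i = 0) (hE : ∀ i ∈ s, ‖u - v i‖ ≤ E i) (hC : ∀ i ∈ s, ‖g i‖ ≤ C i)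
    (hδ : ∀ i ∈ s, |p i - c| ≤ δ i) :
    ‖u - ∑ i ∈ s, (a i • v i + p i • g i)‖ ≤ s.sup' hs E + ∑ i ∈ s, C i * δ i := by
  rw [sum_add_distrib, ← sub_sub]
  exact (norm_sub_le _ _).trans (add_le_add (norm_sub_sum_smul_le_sup' hs a v u E ha ha_sum hE)
    (norm_sum_smul_le_of_sum_eq_zero p g c C δ hg hC hδ))

end PartitionOfUnity

theorem divfree_pum_pointwise_error_general (M : ℕ)
    (Ω : Set (EuclideanSpace ℝ (Fin 2))) (hΩ : IsOpen Ω)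
    (x : EuclideanSpace ℝ (Fin 2)) (hx : x ∈ Ω)
    (Ωp : Fin M → Set (EuclideanSpace ℝ (Fin 2)))
    (w : Fin M → EuclideanSpace ℝ (Fin 2) → ℝ)
    (hw_diff : ∀ ℓ, Differentiable ℝ (w ℓ))
    (hw_sum : ∀ y ∈ Ω, ∑ ℓ, w ℓ y = 1)
    (hw_nonneg : ∀ ℓ y, 0 ≤ w ℓ y)
    (hw_supp : ∀ ℓ, tsupport (w ℓ) ⊆ Ωp ℓ)
    (C : Fin M → ℝ) (hC : ∀ ℓ, ‖gradient (w ℓ) x‖ ≤ C ℓ)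
    (ψ : Fin M → EuclideanSpace ℝ (Fin 2) → ℝ)
    (hψ : ∀ ℓ, Differentiable ℝ (ψ ℓ))
    (u : EuclideanSpace ℝ (Fin 2))
    (E : Fin M → ℝ)
    (hE : ∀ ℓ, x ∈ Ωp ℓ → ‖u - Lop (ψ ℓ) x‖ ≤ E ℓ)
    (k : Fin M) (hk : x ∈ Ωp k)
    (δ : Fin M → ℝ)
    (hδ : ∀ ℓ, x ∈ Ωp ℓ → |ψ ℓ x - ψ k x| ≤ δ ℓ) :
    ‖u - Lop (fun y => ∑ ℓ, w ℓ y * ψ ℓ y) x‖ ≤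
      (Finset.univ.filter fun ℓ => x ∈ Ωp ℓ).sup'
          ⟨k, Finset.mem_filter.mpr ⟨Finset.mem_univ k, hk⟩⟩ E +
        ∑ ℓ ∈ Finset.univ.filter fun ℓ => x ∈ Ωp ℓ, C ℓ * δ ℓ := by
  have hw_out : ∀ ℓ, x ∉ Ωp ℓ → w ℓ x = 0 ∧ Lop (w ℓ) x = 0 := fun ℓ hℓ =>
    have hx_out : x ∉ tsupport (w ℓ) := fun h => hℓ (hw_supp ℓ h)
    ⟨image_eq_zero_of_notMem_tsupport hx_out, Lop_eq_zero_of_notMem_tsupport hx_out⟩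
  have restrict : ∀ {V : Type} [AddCommMonoid V] (f : Fin M → V),
      (∀ ℓ, x ∉ Ωp ℓ → f ℓ = 0) → ∑ ℓ ∈ univ.filter fun ℓ => x ∈ Ωp ℓ, f ℓ = ∑ ℓ, f ℓ :=
    fun f hf => sum_filter_of_ne fun ℓ _ => not_imp_comm.1 (hf ℓ)
  have hw_sum_x : ∑ ℓ ∈ univ.filter fun ℓ => x ∈ Ωp ℓ, w ℓ x = 1 := by
    rw [restrict _ fun ℓ hℓ => (hw_out ℓ hℓ).1, hw_sum x hx]
  have hLw_sum_x : ∑ ℓ ∈ univ.filter fun ℓ => x ∈ Ωp ℓ, Lop (w ℓ) x = 0 := by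
    rw [restrict _ fun ℓ hℓ => (hw_out ℓ hℓ).2]
    exact sum_Lop_eq_zero_of_sum_eventually_const _ w (fun ℓ _ => (hw_diff ℓ).differentiableAt) 1
      (eventually_of_mem (hΩ.mem_nhds hx) hw_sum)
  have happrox : Lop (fun y => ∑ ℓ, w ℓ y * ψ ℓ y) x =
      ∑ ℓ ∈ univ.filter fun ℓ => x ∈ Ωp ℓ, (w ℓ x • Lop (ψ ℓ) x + ψ ℓ x • Lop (w ℓ) x) := by
    rw [restrict _ fun ℓ hℓ => by simp [hw_out ℓ hℓ],
      Lop_fun_sum univ (fun ℓ y => w ℓ y * ψ ℓ y) fun ℓ _ =>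
        ((hw_diff ℓ).mul (hψ ℓ)).differentiableAt]
    exact sum_congr rfl fun ℓ _ => Lop_fun_mul (hw_diff ℓ).differentiableAt (hψ ℓ).differentiableAt
  rw [happrox]
  exact norm_sub_sum_smul_add_smul_le _ _ _ _ _ u (ψ k x) E C δ (fun ℓ _ => hw_nonneg ℓ x)
    hw_sum_x hLw_sum_x (fun ℓ hℓ => hE ℓ (mem_filter.1 hℓ).2)
    (fun ℓ _ => (norm_Lop _ _).trans_le (hC ℓ)) fun ℓ hℓ => hδ ℓ (mem_filter.1 hℓ).2

/-- Pointwise error estimate for the div-free partition-of-unity approximant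
`s̃ = L(Σ_ℓ w_ℓ ψ_ℓ)` in `ℝ²` (Theorem 4.2, planar div-free form): local interpolation
errors `E ℓ`, weight-gradient bounds `C ℓ`, and potential mismatches `δ ℓ` combine to give
`‖u − s̃(x)‖ ≤ max{E ℓ : x ∈ Ω ℓ} + Σ_{ℓ : x ∈ Ω ℓ} C ℓ * δ ℓ`. -/
theorem divfree_pum_pointwise_error (M : ℕ)
    (Ω : Set (EuclideanSpace ℝ (Fin 2))) (hΩ : IsOpen Ω)
    (x : EuclideanSpace ℝ (Fin 2)) (hx : x ∈ Ω)
    (Ωp : Fin M → Set (EuclideanSpace ℝ (Fin 2))) (hΩp : ∀ ℓ, IsOpen (Ωp ℓ))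
    (w : Fin M → EuclideanSpace ℝ (Fin 2) → ℝ)
    (hw_diff : ∀ ℓ, Differentiable ℝ (w ℓ))
    (hw_sum : ∀ y ∈ Ω, ∑ ℓ, w ℓ y = 1)
    (hw_nonneg : ∀ ℓ y, 0 ≤ w ℓ y)
    (hw_supp : ∀ ℓ, tsupport (w ℓ) ⊆ Ωp ℓ)
    (C : Fin M → ℝ) (hC : ∀ ℓ, ‖gradient (w ℓ) x‖ ≤ C ℓ)
    (ψ : Fin M → EuclideanSpace ℝ (Fin 2) → ℝ)
    (hψ : ∀ ℓ, Differentiable ℝ (ψ ℓ))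
    (u : EuclideanSpace ℝ (Fin 2))
    (E : Fin M → ℝ)
    (hE : ∀ ℓ, x ∈ Ωp ℓ → ‖u - Lop (ψ ℓ) x‖ ≤ E ℓ)
    (k : Fin M) (hk : x ∈ Ωp k)
    (δ : Fin M → ℝ)
    (hδ : ∀ ℓ, x ∈ Ωp ℓ → |ψ ℓ x - ψ k x| ≤ δ ℓ) :
    ‖u - Lop (fun y => ∑ ℓ, w ℓ y * ψ ℓ y) x‖ ≤
      (Finset.univ.filter fun ℓ => x ∈ Ωp ℓ).sup'
          ⟨k, Finset.mem_filter.mpr ⟨Finset.mem_univ k, hk⟩⟩ E +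
        ∑ ℓ ∈ Finset.univ.filter fun ℓ => x ∈ Ωp ℓ, C ℓ * δ ℓ :=
  divfree_pum_pointwise_error_general M Ω hΩ x hx Ωp w hw_diff hw_sum hw_nonneg hw_supp C hC ψ hψ u
    E hE k hk δ hδ
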